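/- arXiv:1805.12031 — 7 statements merged into one kernel-verified Lean document; each statement's English description precedes it below -/
import Mathlib

section
/- For integers k ≥ 2 and 2 ≤ a ≤ k-2 with k ≥ 5, and real β with 0 < β < 1, the inequality binom(k,a)·β^a·(1-β)^(k-a) ≤ 1/2 holds. -/
open Real

lemma binom_middle_aux (p t q : ℝ) (hp : 0 ≤ p) (ht : 0 ≤ t) (hq : 0 ≤ q)
    (hsum : p + t + q ≤ 1) (hpq : 4/9 * t^2 ≤ p * q) : t ≤ 1/2 := by
  nlinarith [sq_nonneg (p - q), sq_nonneg (p + q), mul_nonneg hp hq]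

theorem binom_middle_term_le_half (k a : ℕ) (hk : 5 ≤ k) (ha2 : 2 ≤ a)
    (hak : a ≤ k - 2) (β : ℝ) (hβ0 : 0 < β) (hβ1 : β < 1) :
    (k.choose a : ℝ) * β ^ a * (1 - β) ^ (k - a) ≤ 1 / 2 := by
  have hka : a + 2 ≤ k := by omega
  set y : ℝ := 1 - β with hy
  have hy0 : 0 < y := by simp only [hy]; linarith
  set T : ℕ → ℝ := fun j => (k.choose j : ℝ) * β ^ j * y ^ (k - j) with hT
  have hTnn : ∀ j, 0 ≤ T j := fun j => by
    simp only [hT]; positivity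
  -- sum of all terms equals 1
  have hsum : ∑ j ∈ Finset.range (k+1), T j = 1 := by
    have h := add_pow β y k
    have hby : β + y = 1 := by simp [hy]
    rw [hby, one_pow] at h
    have e : ∑ j ∈ Finset.range (k+1), T j
        = ∑ m ∈ Finset.range (k+1), β ^ m * y ^ (k - m) * (k.choose m : ℝ) :=
      Finset.sum_congr rfl fun j _ => by simp only [hT]; ring
    rw [e]; exact h.symm
  -- the three middle terms are at most 1
  have hsub : T (a-1) + T a + T (a+1) ≤ 1 := by
    have hmem : ({a-1, a, a+1} : Finset ℕ) ⊆ Finset.range (k+1) := by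
      intro x hx
      simp only [Finset.mem_insert, Finset.mem_singleton] at hx
      simp only [Finset.mem_range]
      omega
    have h1 := Finset.sum_le_sum_of_subset_of_nonneg hmem (fun i _ _ => hTnn i)
    rw [hsum] at h1
    have e : ∑ j ∈ ({a-1, a, a+1} : Finset ℕ), T j = T (a-1) + T a + T (a+1) := by
      rw [Finset.sum_insert (by simp only [Finset.mem_insert, Finset.mem_singleton]; omega),
        Finset.sum_insert (by simp only [Finset.mem_singleton]; omega),
        Finset.sum_singleton]
      ring
    linarith [e ▸ h1]
  -- key product inequality
  have hprod : (4:ℝ)/9 * T a ^ 2 ≤ T (a-1) * T (a+1) := by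
    have e1 : k.choose a * a = k.choose (a-1) * (k - a + 1) := by
      have h := Nat.choose_succ_right_eq k (a-1)
      have h' : a - 1 + 1 = a := by omega
      rw [h'] at h
      have h'' : k - (a-1) = k - a + 1 := by omega
      rw [h''] at h
      exact h
    have e2 : k.choose (a+1) * (a+1) = k.choose a * (k - a) := Nat.choose_succ_right_eq k a
    have hcpos : 0 < k.choose a := Nat.choose_pos (by omega)
    set d : ℕ := k - a with hd
    have hd2 : 2 ≤ d := by omega
    have e1r : (k.choose a : ℝ) * a = (k.choose (a-1) : ℝ) * (d + 1) := by
      exact_mod_cast congrArg (Nat.cast : ℕ → ℝ) e1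
    have e2r : (k.choose (a+1) : ℝ) * (a+1) = (k.choose a : ℝ) * d := by
      exact_mod_cast congrArg (Nat.cast : ℕ → ℝ) e2
    have hkey : (k.choose (a-1) : ℝ) * (k.choose (a+1)) * ((d+1)*(a+1))
        = (k.choose a : ℝ)^2 * (a*d) := by
      linear_combination (-((k.choose (a+1):ℝ) * (a+1))) * e1r
        + ((k.choose a : ℝ) * a) * e2r
    have hC : (4:ℝ) * (k.choose a)^2 ≤ 9 * ((k.choose (a-1):ℝ) * (k.choose (a+1))) := by
      have ha2' : (2:ℝ) ≤ a := by exact_mod_cast ha2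
      have hd2' : (2:ℝ) ≤ d := by exact_mod_cast hd2
      have hCnn : (0:ℝ) ≤ (k.choose a : ℝ)^2 := sq_nonneg _
      have h9 : 4 * (k.choose a : ℝ)^2 * ((d+1)*(a+1))
          ≤ 9 * ((k.choose (a-1):ℝ) * (k.choose (a+1))) * ((d+1)*(a+1)) := by
        rw [show 9 * ((k.choose (a-1):ℝ) * (k.choose (a+1))) * ((d+1)*(a+1))
            = 9 * ((k.choose (a-1):ℝ) * (k.choose (a+1)) * ((d+1)*(a+1))) by ring, hkey]
        nlinarith [mul_nonneg hCnn (mul_nonneg (by linarith : (0:ℝ) ≤ (a:ℝ) - 2)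
            (by linarith : (0:ℝ) ≤ (d:ℝ) - 2)),
          mul_nonneg hCnn (by linarith : (0:ℝ) ≤ (a:ℝ) - 2),
          mul_nonneg hCnn (by linarith : (0:ℝ) ≤ (d:ℝ) - 2)]
      have hpos : (0:ℝ) < ((d:ℝ)+1)*((a:ℝ)+1) := by positivity
      exact le_of_mul_le_mul_right h9 hpos
    have hpow1 : β ^ (a-1) * β ^ (a+1) = (β ^ a)^2 := by
      rw [← pow_add, ← pow_mul]
      congr 1
      omega
    have hpow2 : y ^ (k-(a-1)) * y ^ (k-(a+1)) = (y ^ (k-a))^2 := by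
      rw [← pow_add, ← pow_mul]
      congr 1
      omega
    have hbq : (0:ℝ) ≤ (β ^ a * y ^ (k-a))^2 := sq_nonneg _
    have expand : T (a-1) * T (a+1)
        = (k.choose (a-1):ℝ) * (k.choose (a+1)) * ((β ^ a * y ^ (k-a))^2) := by
      simp only [hT]
      rw [show (k.choose (a-1):ℝ) * β ^ (a-1) * y ^ (k-(a-1)) *
            ((k.choose (a+1):ℝ) * β ^ (a+1) * y ^ (k-(a+1)))
          = (k.choose (a-1):ℝ) * (k.choose (a+1)) *
            ((β ^ (a-1) * β ^ (a+1)) * (y ^ (k-(a-1)) * y ^ (k-(a+1)))) by ring,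
        hpow1, hpow2]
      ring
    have expandT : T a ^ 2 = (k.choose a : ℝ)^2 * ((β ^ a * y ^ (k-a))^2) := by
      simp only [hT]; ring
    rw [expand, expandT]
    nlinarith [mul_le_mul_of_nonneg_right hC hbq]
  exact binom_middle_aux (T (a-1)) (T a) (T (a+1)) (hTnn _) (hTnn _) (hTnn _) hsub hprod
end

section
/- For all integers k ≥ 2, a with 0 < a ≤ k, and real β with 0 < β ≤ 2/3, the inequality binom(k,a)·β^a·(1-β)^(k-a) ≤ 1/2 holds. -/
open Real

lemma choose_sq_le (b m : ℕ) :
    (((b+m+2).choose (b+1) : ℝ))^2 ≤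
      4 * ((b+m+2).choose b) * ((b+m+2).choose (b+2)) := by
  have h1 := Nat.choose_succ_right_eq (b+m+2) b
  have h2 := Nat.choose_succ_right_eq (b+m+2) (b+1)
  have e1 : b+m+2 - b = m+2 := by omega
  have e2 : b+m+2 - (b+1) = m+1 := by omega
  rw [e1] at h1
  rw [e2] at h2
  have h1' : ((b+m+2).choose (b+1) : ℝ) * (b+1) = ((b+m+2).choose b) * (m+2) := by
    exact_mod_cast congrArg (Nat.cast : ℕ → ℝ) h1
  have h2' : ((b+m+2).choose (b+2) : ℝ) * (b+2) = ((b+m+2).choose (b+1)) * (m+1) := by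
    exact_mod_cast congrArg (Nat.cast : ℕ → ℝ) h2
  have hb : (0:ℝ) < (b:ℝ) + 1 := by positivity
  have hm : (0:ℝ) < (m:ℝ) + 1 := by positivity
  have hC1 : (0:ℝ) ≤ ((b+m+2).choose b : ℝ) := by positivity
  have hC3 : (0:ℝ) ≤ ((b+m+2).choose (b+2) : ℝ) := by positivity
  have key : (((b+m+2).choose (b+1) : ℝ) * (b+1)) * (((b+m+2).choose (b+1) : ℝ) * (m+1)) =
      (((b+m+2).choose b : ℝ) * (m+2)) * (((b+m+2).choose (b+2) : ℝ) * (b+2)) := by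
    rw [h1', ← h2']
  nlinarith [key, mul_pos hb hm, mul_nonneg hC1 hC3,
    mul_nonneg (mul_nonneg hC1 hC3) (mul_nonneg (Nat.cast_nonneg (α := ℝ) b) (Nat.cast_nonneg m)),
    mul_nonneg (mul_nonneg hC1 hC3) (Nat.cast_nonneg (α := ℝ) b),
    mul_nonneg (mul_nonneg hC1 hC3) (Nat.cast_nonneg (α := ℝ) m)]

theorem binom_term_le_half (k a : ℕ) (hk : 2 ≤ k) (ha0 : 0 < a) (hak : a ≤ k)
    (β : ℝ) (hβ0 : 0 < β) (hβ : β ≤ 2 / 3) :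
    (k.choose a : ℝ) * β ^ a * (1 - β) ^ (k - a) ≤ 1 / 2 := by
  rcases eq_or_lt_of_le hak with rfl | hlt
  · -- a = k
    simp only [Nat.choose_self, Nat.cast_one, Nat.sub_self, pow_zero, one_mul, mul_one]
    have h1 : β ^ a ≤ β ^ 2 := pow_le_pow_of_le_one hβ0.le (by linarith) hk
    nlinarith
  · -- a < k
    obtain ⟨b, rfl⟩ : ∃ b, a = b + 1 := ⟨a - 1, by omega⟩
    obtain ⟨m, rfl⟩ : ∃ m, k = b + m + 2 := ⟨k - b - 2, by omega⟩
    set y : ℝ := 1 - β with hy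
    have hy0 : 0 ≤ y := by rw [hy]; linarith
    have hx0 : 0 ≤ β := hβ0.le
    set k := b + m + 2 with hkdef
    have hsum : ∑ i ∈ Finset.range (k+1), β^i * y^(k-i) * (k.choose i) = 1 := by
      rw [← add_pow]
      simp [hy]
    -- sum of three consecutive terms ≤ 1
    have hsub : ({b, b+1, b+2} : Finset ℕ) ⊆ Finset.range (k+1) := by
      intro i hi
      simp only [Finset.mem_insert, Finset.mem_singleton] at hi
      simp only [Finset.mem_range]
      omega
    have h3 : β^b * y^(k-b) * (k.choose b) + β^(b+1) * y^(k-(b+1)) * (k.choose (b+1))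
        + β^(b+2) * y^(k-(b+2)) * (k.choose (b+2)) ≤ 1 := by
      have := Finset.sum_le_sum_of_subset_of_nonneg
        (f := fun i => β^i * y^(k-i) * (k.choose i)) hsub (fun i _ _ => by positivity)
      rw [hsum] at this
      calc β^b * y^(k-b) * (k.choose b) + β^(b+1) * y^(k-(b+1)) * (k.choose (b+1))
            + β^(b+2) * y^(k-(b+2)) * (k.choose (b+2))
          = ∑ i ∈ ({b, b+1, b+2} : Finset ℕ), β^i * y^(k-i) * (k.choose i) := by
            rw [Finset.sum_insert (by simp only [Finset.mem_insert, Finset.mem_singleton]; omega),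
              Finset.sum_insert (by simp only [Finset.mem_singleton]; omega),
              Finset.sum_singleton]
            ring
        _ ≤ 1 := this
    -- key: middle term ≤ sum of outer two
    have e1 : k - b = m + 2 := by omega
    have e2 : k - (b+1) = m + 1 := by omega
    have e3 : k - (b+2) = m := by omega
    rw [e1, e2, e3] at h3
    have hCsq := choose_sq_le b m
    rw [← hkdef] at hCsq
    have hC1 : (1:ℝ) ≤ (k.choose b : ℝ) := by
      exact Nat.one_le_cast.mpr (Nat.choose_pos (by omega))
    have hinner : (k.choose (b+1) : ℝ) * β * y ≤
        (k.choose b) * y^2 + (k.choose (b+2)) * β^2 := by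
      nlinarith [sq_nonneg (2 * (k.choose b : ℝ) * y - (k.choose (b+1)) * β),
        sq_nonneg β, mul_nonneg hx0 hy0]
    have hmid : β^(b+1) * y^(m+1) * (k.choose (b+1)) ≤
        β^b * y^(m+2) * (k.choose b) + β^(b+2) * y^m * (k.choose (b+2)) := by
      have hP : (0:ℝ) ≤ β^b * y^m := by positivity
      have := mul_le_mul_of_nonneg_left hinner hP
      calc β^(b+1) * y^(m+1) * (k.choose (b+1))
          = (β^b * y^m) * ((k.choose (b+1)) * β * y) := by rw [pow_succ, pow_succ]; ring
        _ ≤ (β^b * y^m) * ((k.choose b) * y^2 + (k.choose (b+2)) * β^2) := this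
        _ = β^b * y^(m+2) * (k.choose b) + β^(b+2) * y^m * (k.choose (b+2)) := by
            rw [pow_add, pow_add]; ring
    -- conclude
    have goal2 : 2 * (β^(b+1) * y^(m+1) * (k.choose (b+1))) ≤ 1 := by linarith
    calc (k.choose (b+1) : ℝ) * β ^ (b+1) * y ^ (k - (b+1))
        = β^(b+1) * y^(m+1) * (k.choose (b+1)) := by rw [e2]; ring
      _ ≤ 1/2 := by linarith
end

section
/- Let m, k, a be positive integers and β a real number with 0 < β < 1 such that βm is a positive integer, a ≤ βm, k - a ≤ (1-β)m, and k ≤ m. Then binom(βm, a) · binom((1-β)m, k-a) ≤ binom(m,k) · binom(k,a) · β^a · (1-β)^(k-a) · (1 + 2k/m)^(k-a). -/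
/-!
Write `c = k - a` and `d = m - c`, so that `C(m,k) C(k,a) = C(m,c) C(d,a)`. Comparing falling
factorials factor by factor, `C(n,r) ≤ (n/N)^r C(N,r)` whenever `n ≤ N`; this gives
`C((1-β)m, c) ≤ (1-β)^c C(m,c)` and `C(βm, a) ≤ β^a (m/d)^a C(d,a)`. Finally
`(m/d)^a = (1 + c/d)^a ≤ exp(a/d)^c ≤ exp(k/m)^c ≤ (1 + 2k/m)^c`, because `a/d ≤ k/m ≤ 1`
and `exp x ≤ 1 + 2x` on `[0, 1]`.
-/

open Real

namespace Nat

theorem sub_mul_le_mul_sub {n N : ℕ} (h : n ≤ N) (r : ℕ) : (n - r) * N ≤ n * (N - r) := by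
  rw [Nat.sub_mul, Nat.mul_sub, Nat.mul_comm n r]
  exact Nat.sub_le_sub_left (Nat.mul_le_mul_left r h) _

theorem descFactorial_mul_pow_le_pow_mul_descFactorial {n N : ℕ} (h : n ≤ N) (r : ℕ) :
    n.descFactorial r * N ^ r ≤ n ^ r * N.descFactorial r := by
  induction r with
  | zero => simp
  | succ r ih =>
    calc n.descFactorial (r + 1) * N ^ (r + 1)
        = ((n - r) * N) * (n.descFactorial r * N ^ r) := by rw [descFactorial_succ]; ring
      _ ≤ (n * (N - r)) * (n ^ r * N.descFactorial r) :=
          Nat.mul_le_mul (sub_mul_le_mul_sub h r) ih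
      _ = n ^ (r + 1) * N.descFactorial (r + 1) := by rw [descFactorial_succ]; ring

theorem choose_mul_pow_le_pow_mul_choose {n N : ℕ} (h : n ≤ N) (r : ℕ) :
    n.choose r * N ^ r ≤ n ^ r * N.choose r := by
  have := descFactorial_mul_pow_le_pow_mul_descFactorial h r
  rw [descFactorial_eq_factorial_mul_choose, descFactorial_eq_factorial_mul_choose] at this
  refine Nat.le_of_mul_le_mul_left ?_ r.factorial_pos
  linarith

theorem choose_mul_choose_eq_choose_sub_mul_choose {n k a : ℕ} (hak : a ≤ k) :
    n.choose k * k.choose a = n.choose (k - a) * (n - (k - a)).choose a := by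
  rw [← choose_symm hak, choose_mul (sub_le k a), Nat.sub_sub_self hak]

end Nat

theorem choose_le_div_pow_mul_choose {n N : ℕ} (h : n ≤ N) (r : ℕ) :
    (n.choose r : ℝ) ≤ ((n : ℝ) / N) ^ r * N.choose r := by
  rcases N.eq_zero_or_pos with rfl | hN
  · obtain rfl : n = 0 := Nat.le_zero.mp h
    rcases r.eq_zero_or_pos with rfl | hr
    · simp
    · simp [Nat.choose_eq_zero_of_lt hr]
  rw [div_pow, div_mul_eq_mul_div, le_div_iff₀ (by positivity)]
  exact_mod_cast Nat.choose_mul_pow_le_pow_mul_choose h r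

theorem Real.exp_le_one_add_two_mul {x : ℝ} (h0 : 0 ≤ x) (h1 : x ≤ 1) : exp x ≤ 1 + 2 * x := by
  have := abs_exp_sub_one_le (x := x) (by rwa [abs_of_nonneg h0])
  rw [abs_of_nonneg (by linarith [add_one_le_exp x]), abs_of_nonneg h0] at this
  linarith

theorem div_sub_pow_le_one_add_two_mul_div_pow {m k a : ℕ} (ha : 0 < a) (hak : a ≤ k)
    (hkm : k ≤ m) :
    ((m : ℝ) / (m - (k - a) : ℕ)) ^ a ≤ (1 + 2 * (k : ℝ) / m) ^ (k - a) := by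
  set c := k - a
  set d := m - c
  have hcd : (m : ℝ) = c + d := by norm_cast; omega
  have hd : (0 : ℝ) < d := by norm_cast; omega
  have had : (a : ℝ) / d ≤ k / m := by
    rcases m.eq_zero_or_pos with rfl | hm
    · omega
    rw [div_le_div_iff₀ hd (by positivity)]
    have : a * m ≤ k * d := by
      have hcm : c ≤ m := by omega
      simp only [d, c] at hcm ⊢
      zify [hak, hkm, hcm]
      -- `k * d - a * m = (k - a) * (m - k)`
      nlinarith
    exact_mod_cast this
  have hkm' : (k : ℝ) / m ≤ 1 := div_le_one_of_le₀ (by exact_mod_cast hkm) (by positivity)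
  calc ((m : ℝ) / d) ^ a = (c / d + 1) ^ a := by rw [hcd]; field_simp
    _ ≤ exp (c / d) ^ a := by gcongr; exact add_one_le_exp _
    _ = exp (a / d) ^ c := by rw [← exp_nat_mul, ← exp_nat_mul]; ring_nf
    _ ≤ exp (k / m) ^ c := by gcongr
    _ ≤ (1 + 2 * (k : ℝ) / m) ^ c := by
        gcongr
        rw [mul_div_assoc]
        exact exp_le_one_add_two_mul (by positivity) hkm'

theorem binom_product_bound_general (m k a b : ℕ) (hm : 0 < m) (ha : 0 < a)
    (β : ℝ) (hβ0 : 0 < β) (hβ1 : β < 1) (hβm : (b : ℝ) = β * m)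
    (hak : a ≤ k) (hka : (k : ℝ) - a ≤ (1 - β) * m) (hkm : k ≤ m) :
    (b.choose a : ℝ) * ((m - b).choose (k - a) : ℝ) ≤
      (m.choose k : ℝ) * (k.choose a : ℝ) * β ^ a * (1 - β) ^ (k - a) *
        (1 + 2 * (k : ℝ) / m) ^ (k - a) := by
  have hM : (0 : ℝ) < m := by exact_mod_cast hm
  have hbm : b ≤ m := by exact_mod_cast (show (b : ℝ) ≤ m by rw [hβm]; nlinarith)
  have hmb : ((m - b : ℕ) : ℝ) = (1 - β) * m := by push_cast [hbm]; linarith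
  have hcmb : k - a ≤ m - b := by
    exact_mod_cast (show ((k - a : ℕ) : ℝ) ≤ (m - b : ℕ) by push_cast [hak, hmb]; linarith)
  have hsmall : ((m - b).choose (k - a) : ℝ) ≤ (1 - β) ^ (k - a) * m.choose (k - a) := by
    simpa [hmb, hM.ne'] using choose_le_div_pow_mul_choose (Nat.sub_le m b) (k - a)
  have hlarge : (b.choose a : ℝ) ≤
      β ^ a * (1 + 2 * (k : ℝ) / m) ^ (k - a) * (m - (k - a)).choose a := by
    calc (b.choose a : ℝ) ≤ ((b : ℝ) / (m - (k - a) : ℕ)) ^ a * (m - (k - a)).choose a :=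
          choose_le_div_pow_mul_choose (by omega) a
      _ = β ^ a * ((m : ℝ) / (m - (k - a) : ℕ)) ^ a * (m - (k - a)).choose a := by
          rw [hβm, mul_div_assoc, mul_pow]
      _ ≤ _ := by gcongr; exact div_sub_pow_le_one_add_two_mul_div_pow ha hak hkm
  calc (b.choose a : ℝ) * ((m - b).choose (k - a) : ℝ)
      ≤ (β ^ a * (1 + 2 * (k : ℝ) / m) ^ (k - a) * (m - (k - a)).choose a) *
          ((1 - β) ^ (k - a) * m.choose (k - a)) := by
        gcongr
    _ = _ := by rw [← Nat.cast_mul, Nat.choose_mul_choose_eq_choose_sub_mul_choose hak]; push_cast; ring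

theorem binom_product_bound (m k a b : ℕ) (hm : 0 < m) (hk : 0 < k) (ha : 0 < a)
    (hb : 0 < b) (β : ℝ) (hβ0 : 0 < β) (hβ1 : β < 1) (hβm : (b : ℝ) = β * m)
    (hab : a ≤ b) (hak : a ≤ k) (hka : (k : ℝ) - a ≤ (1 - β) * m) (hkm : k ≤ m) :
    (b.choose a : ℝ) * ((m - b).choose (k - a) : ℝ) ≤
      (m.choose k : ℝ) * (k.choose a : ℝ) * β ^ a * (1 - β) ^ (k - a) *
        (1 + 2 * (k : ℝ) / m) ^ (k - a) :=
  binom_product_bound_general m k a b hm ha β hβ0 hβ1 hβm hak hka hkm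
end

section
/- Let m ≥ 1046 and suppose n ≥ binom(m,k) for integers 1 < k ≤ m/2 and m > 22·(log n)². Then k < sqrt(m / log m). -/
open Real

/-- The standard lower bound `(m/k)^k ≤ binom(m,k)`. -/
lemma pow_div_le_choose_aux : ∀ (k m : ℕ), k ≤ m → ((m : ℝ) / k) ^ k ≤ m.choose k := by
  intro k
  induction k with
  | zero => intro m _; simp
  | succ k ih =>
    intro m hkm
    obtain ⟨m, rfl⟩ : ∃ m', m = m' + 1 := ⟨m - 1, by omega⟩
    have hkm' : k ≤ m := by omega
    have ih' := ih m hkm'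
    have hbase : ((m + 1 : ℕ) : ℝ) / (k + 1 : ℕ) ^ (k) * (((m + 1 : ℕ) : ℝ) / (k + 1 : ℕ)) ≤ 0 ∨ True := Or.inr trivial
    -- base comparison: (m+1)/(k+1) ≤ m/k for k ≥ 1 (trivially handled for k = 0)
    have hstep : (((m + 1 : ℕ) : ℝ) / ((k + 1 : ℕ) : ℝ)) ^ k ≤ ((m : ℝ) / k) ^ k := by
      rcases Nat.eq_zero_or_pos k with rfl | hk0
      · simp
      · apply pow_le_pow_left₀ (by positivity)
        rw [div_le_div_iff₀ (by positivity) (by exact_mod_cast hk0)]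
        push_cast
        have h1 : (k:ℝ) ≤ m := by exact_mod_cast hkm'
        nlinarith [h1]
    have hmain : (((m + 1 : ℕ) : ℝ) / ((k + 1 : ℕ) : ℝ)) ^ (k + 1) ≤
        (((m + 1 : ℕ) : ℝ) / ((k + 1 : ℕ) : ℝ)) * (m.choose k : ℝ) := by
      rw [pow_succ]
      rw [mul_comm]
      apply mul_le_mul_of_nonneg_left _ (by positivity)
      exact hstep.trans ih'
    refine hmain.trans ?_
    have hid : ((m + 1 : ℕ) : ℝ) * (m.choose k : ℝ) = ((m + 1).choose (k + 1) : ℝ) * ((k + 1 : ℕ) : ℝ) := by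
      have := Nat.add_one_mul_choose_eq m k
      exact_mod_cast congrArg (Nat.cast : ℕ → ℝ) this
    rw [div_mul_eq_mul_div, div_le_iff₀ (by positivity)]
    exact hid.le

set_option maxHeartbeats 800000 in
theorem k_lt_sqrt_m_div_log_m (m k n : ℕ) (hm : 1046 ≤ m) (hk : 1 < k)
    (hkm : 2 * k ≤ m) (hn : m.choose k ≤ n) (hmn : 22 * (Real.log n) ^ 2 < (m : ℝ)) :
    (k : ℝ) < Real.sqrt ((m : ℝ) / Real.log m) := by
  have hkm' : k ≤ m := by omega
  have hk0 : (0:ℝ) < k := by exact_mod_cast (by omega : 0 < k)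
  have hm0 : (0:ℝ) < m := by positivity
  have hmR : (1046:ℝ) ≤ m := by exact_mod_cast hm
  have hkR : (1:ℝ) < k := by exact_mod_cast hk
  have hkmR : 2 * (k:ℝ) ≤ m := by exact_mod_cast hkm
  have key : ((m:ℝ)/k)^k ≤ n :=
    (pow_div_le_choose_aux k m hkm').trans (by exact_mod_cast hn)
  have hmk2 : (2:ℝ) ≤ (m:ℝ)/k := by
    rw [le_div_iff₀ hk0]; linarith
  have h2k : (2:ℝ)^k ≤ n := le_trans (pow_le_pow_left₀ (by norm_num) hmk2 k) key
  have hn1 : (2:ℝ) ≤ n := le_trans (le_self_pow₀ (by norm_num) (by omega)) h2k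
  have hn0 : (0:ℝ) < n := by linarith
  set L := Real.log n with hL
  set M := Real.log m with hM
  -- L ≥ k * log 2
  have hlog2k : (k:ℝ) * Real.log 2 ≤ L := by
    have h := Real.log_le_log (by positivity) h2k
    rw [Real.log_pow] at h
    rw [hL]; exact h
  have hlog2 : (0.6931471803:ℝ) < Real.log 2 := Real.log_two_gt_d9
  have hLpos : 0 < L := lt_of_lt_of_le (by nlinarith) hlog2k
  have hL2 : ((k:ℝ) * Real.log 2) * ((k:ℝ) * Real.log 2) ≤ L * L :=
    mul_self_le_mul_self (by positivity) hlog2k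
  -- k^2 < m
  have hk2m : (k:ℝ)^2 < m := by
    nlinarith [hL2, hmn, hlog2, sq_nonneg ((k:ℝ)), sq_nonneg (Real.log 2 - 0.6931471803)]
  -- hence m / k > sqrt m
  have hsqm : Real.sqrt m < (m:ℝ)/k := by
    have h1 : (k:ℝ) < Real.sqrt m := (Real.lt_sqrt (le_of_lt hk0)).mpr hk2m
    have h2 : (m:ℝ) / Real.sqrt m < (m:ℝ)/k := div_lt_div_of_pos_left hm0 hk0 h1
    rwa [Real.div_sqrt] at h2
  -- log (m/k) > M/2
  have hlogmk : M / 2 < Real.log ((m:ℝ)/k) := by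
    have h := Real.log_lt_log (Real.sqrt_pos.mpr hm0) hsqm
    rw [Real.log_sqrt hm0.le] at h
    rw [hM]; exact h
  -- L ≥ k * log(m/k) > k * M/2
  have hkL : (k:ℝ) * (M/2) < L := by
    have h1 : (k:ℝ) * Real.log ((m:ℝ)/k) ≤ L := by
      have h := Real.log_le_log (by positivity) key
      rw [Real.log_pow] at h
      rw [hL]; exact h
    nlinarith
  -- M ≥ 1
  have hM1 : (1:ℝ) ≤ M := by
    rw [hM, ← Real.log_exp 1]
    exact Real.log_le_log (Real.exp_pos 1) (by nlinarith [Real.exp_one_lt_d9])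
  have hMpos : (0:ℝ) < M := by linarith
  -- conclude k^2 * M < m
  have hsq : ((k:ℝ) * (M/2)) * ((k:ℝ) * (M/2)) < L * L :=
    mul_self_lt_mul_self (by positivity) hkL
  have h4 : (22/4 : ℝ) * ((k:ℝ)^2 * M^2) < m := by nlinarith [hsq, hmn]
  have h5 : (k:ℝ)^2 * M ≤ (k:ℝ)^2 * M^2 := by nlinarith [sq_nonneg (k:ℝ), hMpos]
  have hfinal : (k:ℝ)^2 * M < m := by nlinarith [h4, h5, sq_nonneg ((k:ℝ)*M)]
  rw [Real.lt_sqrt hk0.le, lt_div_iff₀ hMpos]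
  exact hfinal
end

section
/- Let Γ' be a finite set with |Γ'| = m', let Γ = (k'-subsets of Γ') for some 2 ≤ k' ≤ m'/2, and let B = (k-subsets of Γ) for some 2 ≤ k ≤ |Γ|/2; suppose m' ≥ 12. Let any permutation of Γ' act naturally on Γ and on B. Then for any subgroup H of Sym(Γ'), every orbit of the induced action of H on B has size at most |B|/2, or is contained in a nontrivial H-block system of B all of whose blocks have size at most |B|/2. -/
/-!
Sort the families `t ∈ B` by their degree function `a ↦ #{s ∈ t | a ∈ s}`, except that a
regular family forms a class of its own. Every permutation of `Γ'` permutes these classes, so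
they form a block system for all of `Sym(Γ')`. Regular classes are singletons, and the class of
an irregular `t` is moved off itself by the transposition of two points of different degree, so
it fills at most half of `B`.

The system is nontrivial because distinct irregular families can share a degree function:
trading the edges `p ∪ A`, `q ∪ A'` for `q ∪ A`, `p ∪ A'` changes no degree, and if the family
obtained this way is regular, replacing an edge common to both sides by a fresh one makes both
irregular.
-/

open Finset Pointwise

section FiberPartition

variable {G α β : Type*} (B : Set α) (f : α → β)

def fiberPartition : Set (Set α) := (fun t => {u ∈ B | f u = f t}) '' B

theorem sUnion_fiberPartition : ⋃₀ fiberPartition B f = B := by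
  ext u
  constructor
  · rintro ⟨_, ⟨t, -, rfl⟩, hu, -⟩
    exact hu
  · intro hu
    exact ⟨_, ⟨u, hu, rfl⟩, hu, rfl⟩

theorem pairwiseDisjoint_fiberPartition : (fiberPartition B f).PairwiseDisjoint id := by
  rintro _ ⟨t, -, rfl⟩ _ ⟨t', -, rfl⟩ hne
  refine Set.disjoint_left.2 fun u hu hu' => hne ?_
  have htt' : f t = f t' := hu.2.symm.trans hu'.2
  simp only [htt']

variable [Group G] [MulAction G α]

theorem image_smul_mem_fiberPartition (hB : ∀ g : G, ∀ a ∈ B, g • a ∈ B)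
    (hf : ∀ (g : G) a b, f a = f b → f (g • a) = f (g • b)) (g : G) {p : Set α}
    (hp : p ∈ fiberPartition B f) : (fun u => g • u) '' p ∈ fiberPartition B f := by
  obtain ⟨t, ht, rfl⟩ := hp
  refine ⟨g • t, hB g t ht, ?_⟩
  ext u
  constructor
  · rintro ⟨hu, hfu⟩
    refine ⟨g⁻¹ • u, ⟨hB _ _ hu, ?_⟩, smul_inv_smul g u⟩
    simpa using hf g⁻¹ _ _ hfu
  · rintro ⟨v, ⟨hv, hfv⟩, rfl⟩
    exact ⟨hB g v hv, hf g _ _ hfv⟩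

theorem two_mul_ncard_fiber_le [Finite α] {g : G} (hB : ∀ a ∈ B, g • a ∈ B)
    (hf : ∀ a b, f a = f b → f (g • a) = f (g • b)) {t : α} (hg : f (g • t) ≠ f t) :
    2 * {u ∈ B | f u = f t}.ncard ≤ B.ncard := by
  set F := {u ∈ B | f u = f t}
  have hdisj : Disjoint F ((fun u => g • u) '' F) := by
    refine Set.disjoint_left.2 ?_
    rintro _ hu ⟨v, hv, rfl⟩
    exact hg (hu.2 ▸ (hf v t hv.2).symm)
  have hsub : F ∪ (fun u => g • u) '' F ⊆ B := by
    rintro _ (hu | ⟨v, hv, rfl⟩)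
    exacts [hu.1, hB v hv.1]
  calc 2 * F.ncard = (F ∪ (fun u => g • u) '' F).ncard := by
        rw [Set.ncard_union_eq hdisj, Set.ncard_image_of_injective _ (MulAction.injective g)]
        ring
    _ ≤ B.ncard := Set.ncard_le_ncard hsub

end FiberPartition

namespace SetFamily

section Uniform

variable (α : Type*) [Fintype α]

def uniform (r e : ℕ) : Finset (Finset (Finset α)) := powersetCard e (powersetCard r univ)

variable {α}

theorem mem_uniform {r e : ℕ} {t : Finset (Finset α)} :
    t ∈ uniform α r e ↔ (∀ s ∈ t, s.card = r) ∧ t.card = e := by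
  simp [uniform, subset_iff]

theorem card_uniform (r e : ℕ) :
    (uniform α r e).card = ((Fintype.card α).choose r).choose e := by
  rw [uniform, card_powersetCard, card_powersetCard, card_univ]

end Uniform

variable {α : Type*} [DecidableEq α]

def degree (t : Finset (Finset α)) (a : α) : ℕ := #{s ∈ t | a ∈ s}

def IsRegular (t : Finset (Finset α)) : Prop := ∀ a b, degree t a = degree t b

theorem degree_union {t u : Finset (Finset α)} (h : Disjoint t u) :
    degree (t ∪ u) = degree t + degree u := by
  funext a
  simp only [degree, Pi.add_apply, filter_union,
    card_union_of_disjoint (disjoint_filter_filter h)]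

theorem degree_pair {s s' : Finset α} (h : s ≠ s') (a : α) :
    degree {s, s'} a = (if a ∈ s then 1 else 0) + (if a ∈ s' then 1 else 0) := by
  rw [degree, card_filter, sum_pair h]

theorem degree_insert_erase {t : Finset (Finset α)} {s s' : Finset α} (hs : s ∈ t)
    (hs' : s' ∉ t) (a : α) : degree (insert s' (t.erase s)) a + (if a ∈ s then 1 else 0) =
      degree t a + (if a ∈ s' then 1 else 0) := by
  have h := sum_erase_add t (fun s => if a ∈ s then 1 else 0) hs
  simp only [degree, card_filter] at h ⊢
  rw [sum_insert fun h => hs' (mem_of_mem_erase h), ← h]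
  ring

theorem not_isRegular_insert_erase {t : Finset (Finset α)} {s s' : Finset α} (ht : IsRegular t)
    (hs : s ∈ t) (hs' : s' ∉ t) (hcard : s.card = s'.card) :
    ¬IsRegular (insert s' (t.erase s)) := by
  have hne : s ≠ s' := fun h => hs' (h ▸ hs)
  obtain ⟨a, has, has'⟩ := not_subset.1 fun h => hne (eq_of_subset_of_card_le h hcard.ge)
  obtain ⟨b, hbs', hbs⟩ := not_subset.1 fun h => hne (eq_of_subset_of_card_le h hcard.le).symm
  intro h
  have ha := degree_insert_erase hs hs' a
  have hb := degree_insert_erase hs hs' b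
  simp only [has, has', hbs, hbs', if_true, if_false] at ha hb
  have := ht a b
  have := h a b
  omega

theorem degree_smul (g : Equiv.Perm α) (t : Finset (Finset α)) (a : α) :
    degree (g • t) a = degree t (g⁻¹ a) := by
  rw [degree, degree, smul_finset_def, filter_image,
    card_image_of_injective _ (MulAction.injective g)]
  congr 1
  refine filter_congr fun s _ => ?_
  rw [← inv_smul_mem_iff]
  rfl

theorem isRegular_smul_iff (g : Equiv.Perm α) {t : Finset (Finset α)} :
    IsRegular (g • t) ↔ IsRegular t := by
  simp only [IsRegular, degree_smul]
  exact ⟨fun h a b => by simpa using h (g a) (g b), fun h a b => h _ _⟩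

open scoped Classical in
/-- Regular families are kept apart, irregular ones are grouped by their degree function. -/
noncomputable def degreeClass (t : Finset (Finset α)) : (α → ℕ) ⊕ Finset (Finset α) :=
  if IsRegular t then .inr t else .inl (degree t)

theorem degreeClass_of_isRegular {t : Finset (Finset α)} (h : IsRegular t) :
    degreeClass t = .inr t := if_pos h

theorem degreeClass_of_not_isRegular {t : Finset (Finset α)} (h : ¬IsRegular t) :
    degreeClass t = .inl (degree t) := if_neg h

theorem degreeClass_smul (g : Equiv.Perm α) (t : Finset (Finset α)) :
    degreeClass (g • t) = Sum.map (fun d a => d (g⁻¹ a)) (g • ·) (degreeClass t) := by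
  by_cases h : IsRegular t
  · rw [degreeClass_of_isRegular h, degreeClass_of_isRegular ((isRegular_smul_iff g).2 h)]
    rfl
  · rw [degreeClass_of_not_isRegular h,
      degreeClass_of_not_isRegular (mt (isRegular_smul_iff g).1 h)]
    exact congrArg Sum.inl (funext (degree_smul g t))

theorem degreeClass_smul_congr (g : Equiv.Perm α) {t u : Finset (Finset α)}
    (h : degreeClass t = degreeClass u) : degreeClass (g • t) = degreeClass (g • u) := by
  rw [degreeClass_smul, degreeClass_smul, h]

theorem eq_of_degreeClass_eq {t u : Finset (Finset α)} (ht : IsRegular t)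
    (h : degreeClass u = degreeClass t) : u = t := by
  rw [degreeClass_of_isRegular ht] at h
  by_cases hu : IsRegular u
  · rwa [degreeClass_of_isRegular hu, Sum.inr.injEq] at h
  · simp [degreeClass_of_not_isRegular hu] at h

theorem degreeClass_swap_ne {t : Finset (Finset α)} {a b : α} (hab : degree t a ≠ degree t b) :
    degreeClass (Equiv.swap a b • t) ≠ degreeClass t := by
  have ht : ¬IsRegular t := fun h => hab (h a b)
  rw [degreeClass_smul, degreeClass_of_not_isRegular ht]
  intro h
  have := congrFun (Sum.inl.inj h) a
  simp at this
  exact hab this.symm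

theorem two_mul_ncard_fiber_degreeClass_le [Finite α] (B : Set (Finset (Finset α)))
    (hB : ∀ g : Equiv.Perm α, ∀ t ∈ B, g • t ∈ B) (hB₂ : 1 < B.ncard) (t : Finset (Finset α)) :
    2 * {u ∈ B | degreeClass u = degreeClass t}.ncard ≤ B.ncard := by
  by_cases ht : IsRegular t
  · have : {u ∈ B | degreeClass u = degreeClass t}.ncard ≤ 1 :=
      (Set.ncard_le_ncard fun u hu => eq_of_degreeClass_eq ht hu.2).trans
        (Set.ncard_singleton t).le
    omega
  · obtain ⟨a, b, hab⟩ : ∃ a b, degree t a ≠ degree t b := by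
      simpa [IsRegular] using ht
    exact two_mul_ncard_fiber_le B degreeClass (hB _)
      (fun _ _ => degreeClass_smul_congr (Equiv.swap a b)) (degreeClass_swap_ne hab)

theorem IsRegular.exists_mem {t : Finset (Finset α)} (ht : IsRegular t) {s : Finset α}
    (hs : s ∈ t) (hs₀ : s.Nonempty) (z : α) : ∃ s ∈ t, z ∈ s := by
  obtain ⟨x, hx⟩ := hs₀
  have : 0 < degree t z := ht x z ▸ card_pos.2 ⟨s, mem_filter.2 ⟨hs, hx⟩⟩
  obtain ⟨s', hs'⟩ := card_pos.1 this
  exact ⟨s', (mem_filter.1 hs').1, (mem_filter.1 hs').2⟩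

variable [Fintype α]

theorem smul_mem_uniform {r e : ℕ} (g : Equiv.Perm α) {t : Finset (Finset α)}
    (ht : t ∈ uniform α r e) : g • t ∈ uniform α r e := by
  rw [mem_uniform] at ht ⊢
  refine ⟨fun s hs => ?_, by rw [card_smul_finset, ht.2]⟩
  obtain ⟨u, hu, rfl⟩ := mem_smul_finset.1 hs
  rw [card_smul_finset, ht.1 u hu]

theorem insert_erase_mem_uniform {r e : ℕ} {t : Finset (Finset α)} {s s' : Finset α}
    (ht : t ∈ uniform α r e) (hs : s ∈ t) (hs' : s' ∉ t) (hs'r : s'.card = r) :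
    insert s' (t.erase s) ∈ uniform α r e := by
  rw [mem_uniform] at ht ⊢
  refine ⟨fun u hu => ?_, ?_⟩
  · rcases mem_insert.1 hu with rfl | hu
    exacts [hs'r, ht.1 u (mem_of_mem_erase hu)]
  · rw [card_insert_of_notMem fun h => hs' (mem_of_mem_erase h), card_erase_of_mem hs, ht.2]
    have := card_pos.2 ⟨s, hs⟩
    omega

theorem union_mem_uniform {r e₁ e₂ : ℕ} {t u : Finset (Finset α)}
    (ht : t ∈ uniform α r e₁) (hu : u ∈ uniform α r e₂) (h : Disjoint t u) :
    t ∪ u ∈ uniform α r (e₁ + e₂) := by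
  rw [mem_uniform] at ht hu ⊢
  refine ⟨fun s hs => ?_, by rw [card_union_of_disjoint h, ht.2, hu.2]⟩
  rcases mem_union.1 hs with hs | hs
  exacts [ht.1 s hs, hu.1 s hs]

theorem pair_mem_uniform {r : ℕ} {s s' : Finset α} (h : s ≠ s') (hs : s.card = r)
    (hs' : s'.card = r) : {s, s'} ∈ uniform α r 2 := by
  rw [mem_uniform, card_pair h]
  refine ⟨fun u hu => ?_, rfl⟩
  rcases mem_insert.1 hu with rfl | hu
  · exact hs
  · rwa [mem_singleton.1 hu]

theorem exists_switching_pair {r : ℕ} (hr : 2 ≤ r) (hn : r + 3 ≤ Fintype.card α) :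
    ∃ u ∈ uniform α r 2, ∃ v ∈ uniform α r 2,
      Disjoint u v ∧ degree u = degree v ∧ ∃ z, ∀ s ∈ u, z ∉ s := by
  obtain ⟨p, q, z, hpq, hpz, hqz⟩ := (Fintype.two_lt_card_iff (α := α)).1 (by omega)
  obtain ⟨S, hS, hSr⟩ : ∃ S ⊆ univ \ {p, q, z}, S.card = r := by
    refine exists_subset_card_eq ?_
    have hsdiff := le_card_sdiff {p, q, z} (univ : Finset α)
    have hthree := card_le_three (a := p) (b := q) (c := z)
    rw [card_univ] at hsdiff
    omega
  obtain ⟨a, ha, b, hb, hab⟩ := one_lt_card.1 (show 1 < S.card by omega)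
  have hpS : p ∉ S := fun h => by simpa using hS h
  have hqS : q ∉ S := fun h => by simpa using hS h
  have hzS : z ∉ S := fun h => by simpa using hS h
  have hcard : ∀ x ∉ S, ∀ c ∈ S, (insert x (S.erase c)).card = r := fun x hx c hc => by
    rw [card_insert_of_notMem fun h => hx (mem_of_mem_erase h), card_erase_of_mem hc]
    omega
  have h₁₃ : insert p (S.erase a) ≠ insert q (S.erase b) :=
    ne_of_mem_of_not_mem' (mem_insert_self p _) (by simp [hpq, hpS])
  have h₂₄ : insert q (S.erase a) ≠ insert p (S.erase b) :=
    ne_of_mem_of_not_mem' (mem_insert_self q _) (by simp [hpq.symm, hqS])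
  have h₁₂ : insert p (S.erase a) ≠ insert q (S.erase a) :=
    ne_of_mem_of_not_mem' (mem_insert_self p _) (by simp [hpq, hpS])
  have h₁₄ : insert p (S.erase a) ≠ insert p (S.erase b) :=
    ne_of_mem_of_not_mem' (a := b) (by simp [hb, hab.symm])
      (by simp [ne_of_mem_of_not_mem hb hpS])
  have h₃₂ : insert q (S.erase b) ≠ insert q (S.erase a) :=
    ne_of_mem_of_not_mem' (a := a) (by simp [ha, hab])
      (by simp [ne_of_mem_of_not_mem ha hqS])
  have h₃₄ : insert q (S.erase b) ≠ insert p (S.erase b) :=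
    ne_of_mem_of_not_mem' (mem_insert_self q _) (by simp [hpq.symm, hqS])
  refine ⟨_, pair_mem_uniform h₁₃ (hcard p hpS a ha) (hcard q hqS b hb),
    _, pair_mem_uniform h₂₄ (hcard q hqS a ha) (hcard p hpS b hb), ?_, ?_, z, ?_⟩
  · simp only [disjoint_insert_left, disjoint_singleton_left, mem_insert, mem_singleton, not_or]
    exact ⟨⟨h₁₂, h₁₄⟩, h₃₂, h₃₄⟩
  · -- swapping `p` and `q` exchanges the two pairs of edges
    funext x
    rw [degree_pair h₁₃, degree_pair h₂₄]
    by_cases hxp : x = p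
    · subst hxp; simp [hpq, hpS]
    by_cases hxq : x = q
    · subst hxq; simp [hpq.symm, hqS]
    simp [hxp, hxq]
  · simp [hpz.symm, hqz.symm, hzS]

theorem exists_degree_eq_pair {r e : ℕ} (hr : 2 ≤ r) (hn : r + 3 ≤ Fintype.card α)
    (he : 2 ≤ e) (hN : 2 * e ≤ (Fintype.card α).choose r) :
    ∃ t₁ ∈ uniform α r e, ∃ t₂ ∈ uniform α r e, t₁ ≠ t₂ ∧ degree t₁ = degree t₂ ∧
      ∃ z, ∀ s ∈ t₁, z ∈ s → s ∈ t₂ := by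
  obtain ⟨u, hu, v, hv, huv, hdeg, z, hz⟩ := exists_switching_pair hr hn
  obtain ⟨R, hR, hRe⟩ : ∃ R ⊆ powersetCard r univ \ (u ∪ v), R.card = e - 2 := by
    refine exists_subset_card_eq ?_
    have hsdiff := le_card_sdiff (u ∪ v) (powersetCard r (univ : Finset α))
    have hunion := card_union_le u v
    rw [card_powersetCard, card_univ, (mem_uniform.1 hu).2, (mem_uniform.1 hv).2] at *
    omega
  have hRmem : R ∈ uniform α r (e - 2) :=
    mem_uniform.2 ⟨fun s hs => (mem_powersetCard.1 (mem_sdiff.1 (hR hs)).1).2, hRe⟩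
  have hdisj : Disjoint (u ∪ v) R := disjoint_sdiff.mono_right hR
  have hmem : ∀ w ∈ uniform α r 2, Disjoint w R → w ∪ R ∈ uniform α r e := fun w hw hwR => by
    simpa [show 2 + (e - 2) = e by omega] using union_mem_uniform hw hRmem hwR
  obtain ⟨s, hs⟩ : u.Nonempty := card_pos.1 (by rw [(mem_uniform.1 hu).2]; omega)
  refine ⟨u ∪ R, hmem u hu (hdisj.mono_left subset_union_left), v ∪ R,
    hmem v hv (hdisj.mono_left subset_union_right), ?_, ?_, z, ?_⟩
  · refine ne_of_mem_of_not_mem' (mem_union_left R hs) fun h => ?_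
    rcases mem_union.1 h with h | h
    exacts [disjoint_left.1 huv hs h, disjoint_left.1 hdisj (mem_union_left v hs) h]
  · rw [degree_union (hdisj.mono_left subset_union_left),
      degree_union (hdisj.mono_left subset_union_right), hdeg]
  · intro s hs hzs
    rcases mem_union.1 hs with hs | hs
    exacts [absurd hzs (hz s hs), mem_union_right v hs]

theorem exists_degree_eq_pair_not_isRegular {r e : ℕ} (hr : 2 ≤ r)
    (hn : r + 3 ≤ Fintype.card α) (he : 2 ≤ e) (hN : 2 * e ≤ (Fintype.card α).choose r) :
    ∃ t₁ ∈ uniform α r e, ∃ t₂ ∈ uniform α r e, t₁ ≠ t₂ ∧ degree t₁ = degree t₂ ∧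
      ¬IsRegular t₁ := by
  obtain ⟨t₁, h₁, t₂, h₂, hne, hdeg, z, hz⟩ := exists_degree_eq_pair hr hn he hN
  by_cases hreg : IsRegular t₁
  swap
  · exact ⟨t₁, h₁, t₂, h₂, hne, hdeg, hreg⟩
  -- a regular `t₁` covers `z`, so it shares an edge `s` with `t₂`; trade it for a fresh one
  obtain ⟨s₀, hs₀⟩ : t₁.Nonempty := card_pos.1 (by rw [(mem_uniform.1 h₁).2]; omega)
  have hs₀r : s₀.card = r := (mem_uniform.1 h₁).1 s₀ hs₀
  obtain ⟨s, hs₁, hzs⟩ := hreg.exists_mem hs₀ (card_pos.1 (by omega)) z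
  have hs₂ := hz s hs₁ hzs
  obtain ⟨s', hs', hs'₁₂⟩ : ∃ s' ∈ powersetCard r univ, s' ∉ t₁ ∪ t₂ := by
    refine exists_mem_notMem_of_card_lt_card ?_
    have := card_union_add_card_inter t₁ t₂
    have := card_pos.2 ⟨s, mem_inter.2 ⟨hs₁, hs₂⟩⟩
    rw [(mem_uniform.1 h₁).2, (mem_uniform.1 h₂).2] at *
    rw [card_powersetCard, card_univ]
    omega
  have hs'r : s'.card = r := (mem_powersetCard.1 hs').2
  have hs'₁ : s' ∉ t₁ := fun h => hs'₁₂ (mem_union_left t₂ h)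
  have hs'₂ : s' ∉ t₂ := fun h => hs'₁₂ (mem_union_right t₁ h)
  refine ⟨_, insert_erase_mem_uniform h₁ hs₁ hs'₁ hs'r, _,
    insert_erase_mem_uniform h₂ hs₂ hs'₂ hs'r, fun h => hne ?_, funext fun x => ?_,
    not_isRegular_insert_erase hreg hs₁ hs'₁ (by rw [hs'r, (mem_uniform.1 h₁).1 s hs₁])⟩
  · have := congrArg (fun t => insert s (t.erase s')) h
    simpa [erase_insert, insert_erase, hs₁, hs₂, hs'₁, hs'₂] using this
  · have h₁x := degree_insert_erase hs₁ hs'₁ x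
    have h₂x := degree_insert_erase hs₂ hs'₂ x
    rw [hdeg] at h₁x
    omega

end SetFamily

open SetFamily in
/-- Lemma 3.5 ("Johnson in Johnson"): with `Γ'` of size `m' ≥ 12`, `Γ` the set of
`k'`-subsets of `Γ'` and `B` the set of `k`-subsets of `Γ`, any subgroup `H` of
`Sym(Γ')` splits `B` into orbits and/or blocks of size at most `|B|/2`. -/
theorem johnson_in_johnson {Γ' : Type*} [Fintype Γ'] [DecidableEq Γ']
    (m' k' k : ℕ) (hcard : Fintype.card Γ' = m') (hm : 12 ≤ m')
    (hk'2 : 2 ≤ k') (hk'm : 2 * k' ≤ m')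
    (hk2 : 2 ≤ k) (hkB : 2 * k ≤ m'.choose k')
    (H : Subgroup (Equiv.Perm Γ'))
    (B : Set (Finset (Finset Γ')))
    (hB : B = {t : Finset (Finset Γ') | (∀ s ∈ t, s.card = k') ∧ t.card = k}) :
    ∀ x ∈ B,
      2 * {y : Finset (Finset Γ') | ∃ g ∈ H, g • x = y}.ncard ≤
          (m'.choose k').choose k ∨
      ∃ P : Set (Set (Finset (Finset Γ'))),
        (⋃₀ P = B) ∧
        (P.PairwiseDisjoint id) ∧
        (∀ g ∈ H, ∀ p ∈ P, (fun y => g • y) '' p ∈ P) ∧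
        (∀ p ∈ P, 2 * p.ncard ≤ (m'.choose k').choose k) ∧
        (∃ p ∈ P, 1 < p.ncard) ∧
        {y : Finset (Finset Γ') | ∃ g ∈ H, g • x = y} ⊆ ⋃₀ P := by
  intro x hx
  right
  subst hcard
  have hBu : B = uniform Γ' k' k := by
    ext t
    rw [hB, mem_coe, mem_uniform]
    rfl
  have hBcard : B.ncard = ((Fintype.card Γ').choose k').choose k := by
    rw [hBu, Set.ncard_coe_finset, card_uniform]
  have hBinv : ∀ g : Equiv.Perm Γ', ∀ t ∈ B, g • t ∈ B := by
    rw [hBu]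
    exact fun g t ht => smul_mem_uniform g ht
  obtain ⟨t₁, ht₁, t₂, ht₂, hne, hdeg, hirr⟩ :=
    exists_degree_eq_pair_not_isRegular (α := Γ') hk'2 (by omega) hk2 hkB
  rw [← mem_coe, ← hBu] at ht₁ ht₂
  refine ⟨fiberPartition B degreeClass, sUnion_fiberPartition B _,
    pairwiseDisjoint_fiberPartition B _,
    fun g _ p hp => image_smul_mem_fiberPartition B _ hBinv
      (fun g _ _ => degreeClass_smul_congr g) g hp, ?_, ⟨_, ⟨t₁, ht₁, rfl⟩, ?_⟩, ?_⟩
  · rintro _ ⟨t, -, rfl⟩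
    rw [← hBcard]
    exact two_mul_ncard_fiber_degreeClass_le B hBinv
      ((Set.one_lt_ncard_iff).2 ⟨t₁, t₂, ht₁, ht₂, hne⟩) t
  · refine (Set.one_lt_ncard_iff).2 ⟨t₁, t₂, ⟨ht₁, rfl⟩, ⟨ht₂, ?_⟩, hne⟩
    rw [degreeClass_of_not_isRegular hirr,
      degreeClass_of_not_isRegular fun h => hirr fun a b => hdeg ▸ h a b, hdeg]
  · rintro _ ⟨g, -, rfl⟩
    rw [sUnion_fiberPartition]
    exact hBinv g x hx
end

section
/- Suppose n and d are integers with n ≥ 1046, d ≥ 1, and n - d ≥ binom(d, ⌊(4/5)d⌋). Then d < 2.42984·log n, where log is the natural logarithm. -/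
open Real

private lemma choose_step_eq (m k : ℕ) (hk : k ≤ m) :
    (m+5).choose (k+4) * ((k+1)*(k+2)*(k+3)*(k+4)*(m+1-k)) =
    m.choose k * ((m+1)*(m+2)*(m+3)*(m+4)*(m+5)) := by
  have h1 := Nat.choose_mul_factorial_mul_factorial (show k+4 ≤ m+5 by omega)
  have h2 := Nat.choose_mul_factorial_mul_factorial hk
  have hsub : m+5-(k+4) = m+1-k := by omega
  rw [hsub] at h1
  have e1 : (k+4).factorial = (k+1)*(k+2)*(k+3)*(k+4)*k.factorial := by
    rw [show k+4 = (k+3)+1 from rfl, Nat.factorial_succ,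
      show k+3 = (k+2)+1 from rfl, Nat.factorial_succ,
      show k+2 = (k+1)+1 from rfl, Nat.factorial_succ, Nat.factorial_succ]
    ring
  have e2 : (m+1-k).factorial = (m+1-k)*(m-k).factorial := by
    rw [show m+1-k = (m-k)+1 by omega, Nat.factorial_succ]
  have e3 : (m+5).factorial = (m+1)*(m+2)*(m+3)*(m+4)*(m+5)*m.factorial := by
    rw [show m+5 = (m+4)+1 from rfl, Nat.factorial_succ,
      show m+4 = (m+3)+1 from rfl, Nat.factorial_succ,
      show m+3 = (m+2)+1 from rfl, Nat.factorial_succ,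
      show m+2 = (m+1)+1 from rfl, Nat.factorial_succ, Nat.factorial_succ]
    try ring
  have ha : 0 < k.factorial * (m-k).factorial :=
    Nat.mul_pos k.factorial_pos (m-k).factorial_pos
  apply Nat.eq_of_mul_eq_mul_right ha
  calc (m+5).choose (k+4) * ((k+1)*(k+2)*(k+3)*(k+4)*(m+1-k)) *
        (k.factorial * (m-k).factorial)
      = (m+5).choose (k+4) * (k+4).factorial * (m+1-k).factorial := by
        rw [e1, e2]; try ring
    _ = (m+5).factorial := h1
    _ = (m+1)*(m+2)*(m+3)*(m+4)*(m+5) * (m.choose k * k.factorial * (m-k).factorial) := by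
        rw [h2, e3]; try ring
    _ = m.choose k * ((m+1)*(m+2)*(m+3)*(m+4)*(m+5)) * (k.factorial * (m-k).factorial) := by
        ring

private lemma choose_step (m : ℕ) (hm : 11 ≤ m) :
    8 * m.choose (4*m/5) ≤ (m+5).choose (4*(m+5)/5) := by
  set k := 4*m/5 with hkdef
  have hk1 : 5*k ≤ 4*m := by omega
  have hk2 : 4*m < 5*k+5 := by omega
  have hk : k ≤ m := by omega
  have hidx : 4*(m+5)/5 = k+4 := by omega
  rw [hidx]
  have key := choose_step_eq m k hk
  -- numeric bound: (m+1)...(m+5) ≥ 8 * (k+1)(k+2)(k+3)(k+4)(m+1-k)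
  have hnum : 8 * ((k+1)*(k+2)*(k+3)*(k+4)*(m+1-k)) ≤ (m+1)*(m+2)*(m+3)*(m+4)*(m+5) := by
    have step1 : 3125 * (8 * ((k+1)*(k+2)*(k+3)*(k+4)*(m+1-k)))
        ≤ 8*((4*m+5)*(4*m+10)*(4*m+15)*(4*m+20)*(m+9)) := by
      have c1 : 5*k+5 ≤ 4*m+5 := by omega
      have c2 : 5*k+10 ≤ 4*m+10 := by omega
      have c3 : 5*k+15 ≤ 4*m+15 := by omega
      have c4 : 5*k+20 ≤ 4*m+20 := by omega
      have c5 : 5*(m+1-k) ≤ m+9 := by omega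
      calc 3125 * (8 * ((k+1)*(k+2)*(k+3)*(k+4)*(m+1-k)))
          = 8*((5*k+5)*(5*k+10)*(5*k+15)*(5*k+20)*(5*(m+1-k))) := by ring
        _ ≤ 8*((4*m+5)*(4*m+10)*(4*m+15)*(4*m+20)*(m+9)) := by gcongr
    have step2 : 8*((4*m+5)*(4*m+10)*(4*m+15)*(4*m+20)*(m+9))
        ≤ 3125 * ((m+1)*(m+2)*(m+3)*(m+4)*(m+5)) := by
      obtain ⟨t, rfl⟩ : ∃ t, m = t + 11 := ⟨m - 11, by omega⟩
      have expand : 3125 * (((t+11)+1)*((t+11)+2)*((t+11)+3)*((t+11)+4)*((t+11)+5))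
          = 8*((4*(t+11)+5)*(4*(t+11)+10)*(4*(t+11)+15)*(4*(t+11)+20)*((t+11)+9))
            + (39392640 + 53937592*t + 13360438*t^2 + 1351487*t^3 + 62078*t^4 + 1077*t^5) := by
        ring
      rw [expand]
      exact Nat.le_add_right _ _
    have h0 := le_trans step1 step2
    exact Nat.le_of_mul_le_mul_left h0 (by norm_num)
  have hD : 0 < (k+1)*(k+2)*(k+3)*(k+4)*(m+1-k) := by
    have : 0 < m+1-k := by omega
    positivity
  have : 8 * m.choose k * ((k+1)*(k+2)*(k+3)*(k+4)*(m+1-k))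
      ≤ (m+5).choose (k+4) * ((k+1)*(k+2)*(k+3)*(k+4)*(m+1-k)) := by
    rw [key]
    calc 8 * m.choose k * ((k+1)*(k+2)*(k+3)*(k+4)*(m+1-k))
        = m.choose k * (8 * ((k+1)*(k+2)*(k+3)*(k+4)*(m+1-k))) := by ring
      _ ≤ m.choose k * ((m+1)*(m+2)*(m+3)*(m+4)*(m+5)) :=
          Nat.mul_le_mul_left _ hnum
  exact Nat.le_of_mul_le_mul_right this hD

private lemma choose_lb : ∀ d : ℕ, 17 ≤ d → 8^d ≤ (d.choose (4*d/5))^5 := by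
  intro d
  induction d using Nat.strong_induction_on with
  | _ d ih =>
    intro hd
    rcases lt_or_ge d 22 with h22 | h22
    · interval_cases d <;> decide
    · have hm : 11 ≤ d - 5 := by omega
      have hstep := choose_step (d-5) hm
      rw [show d - 5 + 5 = d by omega] at hstep
      have ih' := ih (d-5) (by omega) (by omega)
      calc 8^d = 8^5 * 8^(d-5) := by rw [← pow_add]; congr 1; omega
        _ ≤ 8^5 * ((d-5).choose (4*(d-5)/5))^5 := Nat.mul_le_mul_left _ ih'
        _ = (8 * (d-5).choose (4*(d-5)/5))^5 := by ring
        _ ≤ (d.choose (4*d/5))^5 := Nat.pow_le_pow_left hstep 5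

theorem wielandt_transitivity_bound (n d : ℕ) (hn : 1046 ≤ n) (hd : 1 ≤ d)
    (h : (d.choose (4 * d / 5) : ℝ) ≤ (n : ℝ) - d) :
    (d : ℝ) < 2.42984 * Real.log n := by
  have hlog2 := Real.log_two_gt_d9
  rcases lt_or_ge d 17 with h17 | h17
  · -- small d : use n ≥ 1046 > 1024 = 2^10
    have h1024 : (1024:ℝ) < n := by
      have : (1046:ℝ) ≤ n := by exact_mod_cast hn
      linarith
    have hlogn : Real.log 1024 < Real.log n := Real.log_lt_log (by norm_num) h1024
    have h10 : Real.log 1024 = 10 * Real.log 2 := by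
      rw [show (1024:ℝ) = 2^10 by norm_num, Real.log_pow]
      norm_num
    have hdle : (d:ℝ) ≤ 16 := by exact_mod_cast Nat.le_of_lt_succ h17
    rw [h10] at hlogn
    nlinarith
  · -- large d
    have hC := choose_lb d h17
    set C := d.choose (4*d/5) with hCdef
    have hCpos : 0 < C := Nat.choose_pos (by omega)
    have hCn : (C:ℝ) < n := by
      have hd1 : (1:ℝ) ≤ d := by exact_mod_cast hd
      have h' : (C:ℝ) ≤ (n:ℝ) - d := by
        rw [hCdef]; exact_mod_cast h
      linarith
    have hCposR : (0:ℝ) < C := by exact_mod_cast hCpos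
    have hlogn : Real.log C < Real.log n := Real.log_lt_log hCposR hCn
    have hCR : (8:ℝ)^d ≤ (C:ℝ)^5 := by exact_mod_cast hC
    have hlogC : (d:ℝ) * Real.log 8 ≤ 5 * Real.log C := by
      have hle : Real.log ((8:ℝ)^d) ≤ Real.log ((C:ℝ)^5) := by
        apply Real.log_le_log (by positivity) hCR
      rwa [Real.log_pow, Real.log_pow] at hle
    have h8 : Real.log (8:ℝ) = 3 * Real.log 2 := by
      rw [show (8:ℝ) = 2^3 by norm_num, Real.log_pow]
      norm_num
    rw [h8] at hlogC
    have hd0 : (0:ℝ) ≤ d := Nat.cast_nonneg d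
    nlinarith [mul_le_mul_of_nonneg_left hlog2.le hd0]
end

section
/- Let β ∈ (0,1) be real and a, k positive integers with 2 ≤ a ≤ k-2 and k ≥ 5. Then (1-β)·a/(β·(k-a+1)) + β·(k-a)/((1-β)·(a+1)) ≥ 1. -/
theorem aux_ratio_sum_ge_one (β : ℝ) (hβ0 : 0 < β) (hβ1 : β < 1)
    (a k : ℕ) (ha : 2 ≤ a) (hak : a ≤ k - 2) (hk : 5 ≤ k) :
    1 ≤ (1 - β) * (a : ℝ) / (β * ((k : ℝ) - (a : ℝ) + 1))
      + β * ((k : ℝ) - (a : ℝ)) / ((1 - β) * ((a : ℝ) + 1)) := by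
  have ha' : (2:ℝ) ≤ a := by exact_mod_cast ha
  have hka : (2:ℝ) ≤ (k:ℝ) - a := by
    have : a + 2 ≤ k := by omega
    have : (a:ℝ) + 2 ≤ k := by exact_mod_cast this
    linarith
  have h1 : 0 < β * ((k : ℝ) - a + 1) := by positivity
  have h2 : 0 < (1 - β) * ((a:ℝ) + 1) := by nlinarith
  rw [div_add_div _ _ (ne_of_gt h1) (ne_of_gt h2), le_div_iff₀ (by positivity)]
  have hs : (0:ℝ) < 1 - β := by linarith
  nlinarith [sq_nonneg ((1-β)*a - β*((k:ℝ)-a)),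
    mul_nonneg (mul_nonneg (mul_nonneg hβ0.le hs.le) (by linarith : (0:ℝ) ≤ (a:ℝ))) (by linarith : (0:ℝ) ≤ (k:ℝ)-a-2),
    mul_nonneg (mul_nonneg (mul_nonneg hβ0.le hs.le) (by linarith : (0:ℝ) ≤ (k:ℝ)-a)) (by linarith : (0:ℝ) ≤ (a:ℝ)-2),
    mul_nonneg (sq_nonneg (1-β)) (by linarith : (0:ℝ) ≤ (a:ℝ)-2),
    mul_nonneg (sq_nonneg β) (by linarith : (0:ℝ) ≤ (k:ℝ)-a-2),
    sq_nonneg (1-2*β), mul_pos hβ0 hs]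
end
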